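/- For every nonnegative integer N, G_{1,3N-2}(a,b,q) = ∑_{l=0}^{⌊N/2⌋} (q^3)^{binom(N-2l,2)} [N choose 2l]_{q^3} (-a q^2; q^6)_l (-b q^4; q^6)_l, where G_{1,3N-2}(a,b,q) is the generating function for partitions with no part equal to 1, consecutive-part differences ≥ 4 unless the parts are consecutive multiples of 3 or sum to a multiple of 6, largest part ≤ 3N-2, with a tracking parts ≡ 2 mod 3 and b tracking parts ≡ 1 mod 3. -/

import Mathlib

open Finset

namespace CapparelliAAG

noncomputable def a : MvPowerSeries (Fin 3) ℚ := MvPowerSeries.X 0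
noncomputable def b : MvPowerSeries (Fin 3) ℚ := MvPowerSeries.X 1
noncomputable def q : MvPowerSeries (Fin 3) ℚ := MvPowerSeries.X 2

/-- The finite q-Pochhammer symbol `(x; Q)_l = ∏_{t=0}^{l-1} (1 - x Qᵗ)`. -/
noncomputable def qPoch (x Q : MvPowerSeries (Fin 3) ℚ) (l : ℕ) : MvPowerSeries (Fin 3) ℚ :=
  ∏ t ∈ Finset.range l, (1 - x * Q ^ t)

/-- The Gaussian binomial coefficient `[N choose k]_Q` (zero unless `N ≥ k ≥ 0`). -/
noncomputable def qBinom (Q : MvPowerSeries (Fin 3) ℚ) (N k : ℕ) : MvPowerSeries (Fin 3) ℚ :=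
  if k ≤ N then ∏ t ∈ Finset.range k, (1 - Q ^ (N - t)) * (1 - Q ^ (t + 1))⁻¹ else 0

/-- `G₁ Nb` is the generating function `G_{1,Nb}(a,b,q)`: the coefficient of `aⁱ bʲ qⁿ`
is the number of partitions of `n` with no part equal to 1, largest part `≤ Nb`,
consecutive-part differences `≥ 4` unless the parts are consecutive multiples of 3 or
sum to a multiple of 6 (difference at least 2), with exactly `i` parts `≡ 2 (mod 3)`
and exactly `j` parts `≡ 1 (mod 3)`. -/
noncomputable def G₁ (Nb : ℕ) : MvPowerSeries (Fin 3) ℚ :=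
  fun d =>
    (Nat.card {l : List ℕ // (∀ x ∈ l, 0 < x ∧ x ≠ 1 ∧ x ≤ Nb) ∧
        l.Chain' (fun x y => y + 2 ≤ x ∧
          (y + 4 ≤ x ∨ (3 ∣ y ∧ x = y + 3) ∨ 6 ∣ (x + y))) ∧
        (l.filter (fun x => x % 3 = 2)).length = d 0 ∧
        (l.filter (fun x => x % 3 = 1)).length = d 1 ∧
        l.sum = d 2} : ℚ)

/-!
Write `x = q³`, `A = a q²`, `B = b q⁴` and `G N = G_{1,N}`. Removing the largest part of a
partition gives
`G (3n+2) = G (3n+1) + A xⁿ G (3n-2)`, `G (3n+3) = G (3n+2) + x^(n+1) G (3n)` and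
`G (3n+4) = G (3n+3) + B xⁿ (G (3n) + A xⁿ G (3n-2))`,
since a largest part `3n+4` can only be followed by a part `≤ 3n` or by `3n+2`. So `G (3n-2)` and
`G (3n)` satisfy a coupled recurrence with known initial values. The right-hand side `E n` of the
theorem, together with `C n = E n + x^(n-1) (A + x) O n`, where `O n` is the same sum over odd
indices, satisfies the same recurrence: after the q-Pascal rule and the absorption identity
`(1 - x^(k+1)) [n, k+1] = (1 - x^(n-k)) [n, k]`, what is left telescopes.
-/

section GaussBinom

variable {R : Type*} [CommRing R] (x : R)

/-- The Gaussian binomial `[n, k]_x`, defined by the q-Pascal rule so that no division is needed. -/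
def gaussBinom : ℕ → ℕ → R
  | _, 0 => 1
  | 0, _ + 1 => 0
  | n + 1, k + 1 => gaussBinom n k + x ^ (k + 1) * gaussBinom n (k + 1)

@[simp]
lemma gaussBinom_zero_right (n : ℕ) : gaussBinom x n 0 = 1 := by
  cases n <;> rfl

lemma gaussBinom_succ_succ (n k : ℕ) :
    gaussBinom x (n + 1) (k + 1) = gaussBinom x n k + x ^ (k + 1) * gaussBinom x n (k + 1) :=
  rfl

lemma gaussBinom_eq_zero_of_lt : ∀ {n k : ℕ}, n < k → gaussBinom x n k = 0
  | 0, _ + 1, _ => rfl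
  | n + 1, k + 1, h => by
    rw [gaussBinom_succ_succ, gaussBinom_eq_zero_of_lt (by omega),
      gaussBinom_eq_zero_of_lt (by omega), mul_zero, add_zero]

lemma one_sub_pow_mul_gaussBinom_succ (n k : ℕ) :
    (1 - x ^ (k + 1)) * gaussBinom x n (k + 1) = (1 - x ^ (n - k)) * gaussBinom x n k := by
  induction n generalizing k with
  | zero => simp [gaussBinom_eq_zero_of_lt x (Nat.succ_pos k)]
  | succ n ih =>
    cases k with
    | zero =>
      have h := ih 0
      simp only [Nat.sub_zero, gaussBinom_zero_right, zero_add, pow_one] at h ⊢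
      rw [gaussBinom_succ_succ, gaussBinom_zero_right]
      linear_combination x * h
    | succ k =>
      rw [gaussBinom_succ_succ, gaussBinom_succ_succ]
      rcases lt_or_ge k n with hk | hk
      · obtain ⟨e, rfl⟩ : ∃ e, n = k + 1 + e := ⟨n - (k + 1), by omega⟩
        have h1 := ih (k + 1)
        have h0 := ih k
        rw [show k + 1 + e - (k + 1) = e by omega] at h1
        rw [show k + 1 + e - k = e + 1 by omega] at h0
        rw [show k + 1 + e + 1 - (k + 1) = e + 1 by omega]
        linear_combination x ^ (k + 2) * h1 + h0
      · rw [gaussBinom_eq_zero_of_lt x (by omega : n < k + 1),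
          gaussBinom_eq_zero_of_lt x (by omega : n < k + 1 + 1), Nat.sub_eq_zero_of_le (by omega)]
        ring

lemma gaussBinom_mul_prod (n k : ℕ) :
    gaussBinom x n k * ∏ t ∈ range k, (1 - x ^ (t + 1)) = ∏ t ∈ range k, (1 - x ^ (n - t)) := by
  induction k with
  | zero => simp
  | succ k ih =>
    rw [prod_range_succ, prod_range_succ, ← ih]
    linear_combination (∏ t ∈ range k, (1 - x ^ (t + 1))) * one_sub_pow_mul_gaussBinom_succ x n k

end GaussBinom

lemma choose_two_succ (m : ℕ) : (m + 1).choose 2 = m.choose 2 + m := by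
  rw [Nat.choose_succ_succ', Nat.choose_one_right, add_comm]

lemma sum_range_eq_of_le {M : Type*} [AddCommMonoid M] {f : ℕ → M} {m n : ℕ} (hmn : m ≤ n)
    (hf : ∀ l, m ≤ l → f l = 0) : ∑ l ∈ range n, f l = ∑ l ∈ range m, f l :=
  (sum_subset (range_subset_range.2 hmn) fun l _ hl => hf l (by simpa using hl)).symm

section Sums

variable {R : Type*} [CommRing R] (x A B : R)

/-- `(-c; Q)_l` -/
def negQPoch (c Q : R) (l : ℕ) : R := ∏ t ∈ range l, (1 + c * Q ^ t)

@[simp]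
lemma negQPoch_zero (c Q : R) : negQPoch c Q 0 = 1 := prod_range_zero _

lemma negQPoch_succ (c Q : R) (l : ℕ) : negQPoch c Q (l + 1) = negQPoch c Q l * (1 + c * Q ^ l) :=
  prod_range_succ _ _

/-- For `x = q³`, `A = a q²`, `B = b q⁴` this is the right-hand side of the theorem, with the sum
running over more (vanishing) terms. -/
def evenSum (n : ℕ) : R :=
  ∑ l ∈ range (n + 1), x ^ (n - 2 * l).choose 2 * gaussBinom x n (2 * l) *
    negQPoch A (x ^ 2) l * negQPoch B (x ^ 2) l

def oddSum (n : ℕ) : R :=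
  ∑ l ∈ range (n + 1), x ^ (n - 1 - 2 * l).choose 2 * gaussBinom x n (2 * l + 1) *
    negQPoch A (x ^ 2) l * negQPoch B (x ^ 2) l

def mixedSum (n : ℕ) : R :=
  ∑ l ∈ range (n + 2), x ^ (n - 2 * l).choose 2 * gaussBinom x (n + 1) (2 * l + 1) *
    negQPoch A (x ^ 2) (l + 1) * negQPoch B (x ^ 2) l

/-- The counterpart of `evenSum` for `G_{1,3n}`. -/
def companionSum (n : ℕ) : R := evenSum x A B n + x ^ (n - 1) * (A + x) * oddSum x A B n

lemma evenSum_eq_sum_range {n M : ℕ} (h : n + 1 ≤ M) :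
    evenSum x A B n = ∑ l ∈ range M, x ^ (n - 2 * l).choose 2 * gaussBinom x n (2 * l) *
      negQPoch A (x ^ 2) l * negQPoch B (x ^ 2) l :=
  (sum_range_eq_of_le h fun l hl => by
    rw [gaussBinom_eq_zero_of_lt x (by omega)]; ring).symm

lemma oddSum_eq_sum_range {n M : ℕ} (h : n + 1 ≤ M) :
    oddSum x A B n = ∑ l ∈ range M, x ^ (n - 1 - 2 * l).choose 2 * gaussBinom x n (2 * l + 1) *
      negQPoch A (x ^ 2) l * negQPoch B (x ^ 2) l :=
  (sum_range_eq_of_le h fun l hl => by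
    rw [gaussBinom_eq_zero_of_lt x (by omega)]; ring).symm

@[simp]
lemma evenSum_zero : evenSum x A B 0 = 1 := by
  simp [evenSum]

@[simp]
lemma evenSum_one : evenSum x A B 1 = 1 := by
  simp [evenSum, sum_range_succ, gaussBinom_eq_zero_of_lt x (by omega : 1 < 2)]

@[simp]
lemma oddSum_zero : oddSum x A B 0 = 0 := by
  simp [oddSum, gaussBinom_eq_zero_of_lt x (by omega : 0 < 1)]

@[simp]
lemma companionSum_zero : companionSum x A B 0 = 1 := by
  simp [companionSum]

lemma oddSum_succ (n : ℕ) : oddSum x A B (n + 1) = evenSum x A B n + x ^ n * oddSum x A B n := by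
  rw [oddSum, evenSum_eq_sum_range x A B (by omega : n + 1 ≤ n + 2),
    oddSum_eq_sum_range x A B (by omega : n + 1 ≤ n + 2), mul_sum, ← sum_add_distrib]
  refine sum_congr rfl fun l _ => ?_
  rw [gaussBinom_succ_succ, show n + 1 - 1 - 2 * l = n - 2 * l by omega]
  rcases lt_or_ge n (2 * l + 1) with h | h
  · rw [gaussBinom_eq_zero_of_lt x h]; ring
  · obtain ⟨e, rfl⟩ : ∃ e, n = 2 * l + 1 + e := ⟨n - (2 * l + 1), by omega⟩
    rw [show 2 * l + 1 + e - 2 * l = e + 1 by omega, show 2 * l + 1 + e - 1 - 2 * l = e by omega,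
      choose_two_succ]
    ring

lemma companionSum_succ (n : ℕ) : companionSum x A B (n + 1) =
    evenSum x A B (n + 1) + A * x ^ n * evenSum x A B n + x ^ (n + 1) * companionSum x A B n := by
  rw [companionSum, companionSum, oddSum_succ, Nat.add_sub_cancel]
  cases n with
  | zero => simp only [oddSum_zero]; ring
  | succ n => rw [Nat.add_sub_cancel]; ring

lemma mixedSum_eq (n : ℕ) :
    mixedSum x A B n = companionSum x A B n + A * x ^ n * evenSum x A B n := by
  rw [mixedSum, companionSum, evenSum_eq_sum_range x A B (by omega : n + 1 ≤ n + 2),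
    oddSum_eq_sum_range x A B (by omega : n + 1 ≤ n + 2), mul_sum, mul_sum, ← sum_add_distrib,
    ← sum_add_distrib]
  refine sum_congr rfl fun l _ => ?_
  rw [gaussBinom_succ_succ, negQPoch_succ, ← pow_mul]
  rcases lt_trichotomy n (2 * l) with h | rfl | h
  · rw [gaussBinom_eq_zero_of_lt x h, gaussBinom_eq_zero_of_lt x (by omega)]; ring
  · rw [gaussBinom_eq_zero_of_lt x (by omega : 2 * l < 2 * l + 1), Nat.sub_self]; ring
  · obtain ⟨e, rfl⟩ : ∃ e, n = 2 * l + 1 + e := ⟨n - (2 * l + 1), by omega⟩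
    have habs := one_sub_pow_mul_gaussBinom_succ x (2 * l + 1 + e) (2 * l)
    rw [show 2 * l + 1 + e - 2 * l = e + 1 by omega] at habs
    rw [show 2 * l + 1 + e - 2 * l = e + 1 by omega, show 2 * l + 1 + e - 1 - 2 * l = e by omega,
      show 2 * l + 1 + e - 1 = 2 * l + e by omega, choose_two_succ]
    linear_combination (-(A * x ^ (e + 2 * l) * x ^ e.choose 2 * negQPoch A (x ^ 2) l *
      negQPoch B (x ^ 2) l)) * habs

def weightDiffSum (n : ℕ) : R :=
  ∑ l ∈ range (n + 2), x ^ (n - 2 * l).choose 2 * ((1 - x ^ (2 * l + 2)) *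
    gaussBinom x (n + 1) (2 * l + 2)) * (negQPoch A (x ^ 2) (l + 1) * negQPoch B (x ^ 2) (l + 1) -
      negQPoch A (x ^ 2) l * negQPoch B (x ^ 2) l)

def shiftedOddSum (n : ℕ) : R :=
  ∑ l ∈ range (n + 2), x ^ (n - 2 * l).choose 2 * gaussBinom x (n + 1) (2 * l + 1) *
    negQPoch A (x ^ 2) (l + 1) * negQPoch B (x ^ 2) (l + 1)

lemma evenSum_add_two_eq_shiftedOddSum (n : ℕ) :
    evenSum x A B (n + 2) = x ^ (n + 1) * evenSum x A B (n + 1) + shiftedOddSum x A B n := by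
  rw [evenSum, shiftedOddSum, evenSum_eq_sum_range x A B (by omega : n + 1 + 1 ≤ n + 2 + 1),
    sum_range_succ' _ (n + 2), sum_range_succ' _ (n + 2), mul_add, mul_sum, add_right_comm,
    ← sum_add_distrib]
  congr 1
  · refine sum_congr rfl fun l _ => ?_
    rw [show 2 * (l + 1) = 2 * l + 1 + 1 by ring, gaussBinom_succ_succ,
      show n + 2 - (2 * l + 1 + 1) = n - 2 * l by omega,
      show n + 1 - (2 * l + 1 + 1) = n - 1 - 2 * l by omega]
    rcases lt_or_ge n (2 * l + 1) with h | h
    · rw [gaussBinom_eq_zero_of_lt x (by omega : n + 1 < 2 * l + 1 + 1)]; ring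
    · obtain ⟨e, rfl⟩ : ∃ e, n = 2 * l + 1 + e := ⟨n - (2 * l + 1), by omega⟩
      rw [show 2 * l + 1 + e - 2 * l = e + 1 by omega, show 2 * l + 1 + e - 1 - 2 * l = e by omega,
        choose_two_succ]
      ring
  · simp only [mul_zero, Nat.sub_zero, gaussBinom_zero_right, negQPoch_zero,
      show n + 2 = n + 1 + 1 by ring, choose_two_succ]
    ring

lemma shiftedOddSum_eq (n : ℕ) : shiftedOddSum x A B n =
    (1 + A * x ^ n) * oddSum x A B (n + 1) + B * x ^ n * mixedSum x A B n +
      weightDiffSum x A B n := by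
  rw [shiftedOddSum, oddSum, mixedSum, weightDiffSum, mul_sum, mul_sum, ← sum_add_distrib,
    ← sum_add_distrib]
  refine sum_congr rfl fun l _ => ?_
  rw [negQPoch_succ, negQPoch_succ, ← pow_mul, show n + 1 - 1 - 2 * l = n - 2 * l by omega]
  rcases lt_or_ge n (2 * l) with h | h
  · rw [gaussBinom_eq_zero_of_lt x (by omega : n + 1 < 2 * l + 1),
      gaussBinom_eq_zero_of_lt x (by omega : n + 1 < 2 * l + 2)]
    ring
  · obtain ⟨e, rfl⟩ : ∃ e, n = 2 * l + e := ⟨n - 2 * l, by omega⟩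
    have habs := one_sub_pow_mul_gaussBinom_succ x (2 * l + e + 1) (2 * l + 1)
    rw [show 2 * l + e + 1 - (2 * l + 1) = e by omega] at habs
    rw [Nat.add_sub_cancel_left]
    linear_combination (-(x ^ e.choose 2 * negQPoch A (x ^ 2) l * negQPoch B (x ^ 2) l *
      ((1 + A * x ^ (2 * l)) * (1 + B * x ^ (2 * l)) - 1))) * habs

-- The `l`-th terms of the next identity, once the half of `weightDiffSum` carrying the weights
-- at `l + 1` is shifted down by one.
lemma one_sub_pow_mul_evenSum_sub_oddSum_term (n l : ℕ) : (1 - x ^ (n + 1)) *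
    (x ^ (n + 1 - 2 * l).choose 2 * gaussBinom x (n + 1) (2 * l) * negQPoch A (x ^ 2) l *
      negQPoch B (x ^ 2) l - x ^ (n + 1 - 1 - 2 * l).choose 2 * gaussBinom x (n + 1) (2 * l + 1) *
      negQPoch A (x ^ 2) l * negQPoch B (x ^ 2) l) =
    x ^ (n + 2 - 2 * l).choose 2 * ((1 - x ^ (2 * l)) * gaussBinom x (n + 1) (2 * l)) *
      (negQPoch A (x ^ 2) l * negQPoch B (x ^ 2) l) -
    x ^ (n - 2 * l).choose 2 * ((1 - x ^ (2 * l + 2)) * gaussBinom x (n + 1) (2 * l + 2)) *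
      (negQPoch A (x ^ 2) l * negQPoch B (x ^ 2) l) := by
  rcases lt_trichotomy (n + 1) (2 * l) with h | h | h
  · rw [gaussBinom_eq_zero_of_lt x h, gaussBinom_eq_zero_of_lt x (by omega : n + 1 < 2 * l + 1),
      gaussBinom_eq_zero_of_lt x (by omega : n + 1 < 2 * l + 2)]
    ring
  · rw [gaussBinom_eq_zero_of_lt x (by omega : n + 1 < 2 * l + 1),
      gaussBinom_eq_zero_of_lt x (by omega : n + 1 < 2 * l + 2), ← h,
      show n + 2 - (n + 1) = 1 by omega, Nat.sub_self]
    simp only [Nat.choose_zero_succ, Nat.choose_succ_self, pow_zero]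
    ring
  · obtain ⟨e, rfl⟩ : ∃ e, n = 2 * l + e := ⟨n - 2 * l, by omega⟩
    have habs₀ := one_sub_pow_mul_gaussBinom_succ x (2 * l + e + 1) (2 * l)
    have habs₁ := one_sub_pow_mul_gaussBinom_succ x (2 * l + e + 1) (2 * l + 1)
    rw [show 2 * l + e + 1 - 2 * l = e + 1 by omega] at habs₀
    rw [show 2 * l + e + 1 - (2 * l + 1) = e by omega] at habs₁
    rw [show 2 * l + e + 2 - 2 * l = e + 1 + 1 by omega,
      show 2 * l + e + 1 - 2 * l = e + 1 by omega,
      show 2 * l + e + 1 - 1 - 2 * l = e by omega, Nat.add_sub_cancel_left]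
    simp only [choose_two_succ]
    linear_combination (x ^ e.choose 2 * negQPoch A (x ^ 2) l * negQPoch B (x ^ 2) l) *
      (habs₁ - x ^ e * habs₀)

lemma one_sub_pow_mul_evenSum_sub_oddSum (n : ℕ) :
    (1 - x ^ (n + 1)) * (evenSum x A B (n + 1) - oddSum x A B (n + 1)) = weightDiffSum x A B n := by
  rw [evenSum_eq_sum_range x A B (by omega : n + 1 + 1 ≤ n + 3),
    oddSum_eq_sum_range x A B (by omega : n + 1 + 1 ≤ n + 3), ← sum_sub_distrib, mul_sum,
    sum_congr rfl fun l _ => one_sub_pow_mul_evenSum_sub_oddSum_term x A B n l, sum_sub_distrib,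
    sum_range_succ' _ (n + 2), sum_range_succ _ (n + 2), weightDiffSum,
    gaussBinom_eq_zero_of_lt x (by omega : n + 1 < 2 * (n + 2) + 2)]
  simp only [mul_zero, pow_zero, sub_self, zero_mul, add_zero, ← sum_sub_distrib]
  refine sum_congr rfl fun l _ => ?_
  rw [show n + 2 - 2 * (l + 1) = n - 2 * l by omega, show 2 * (l + 1) = 2 * l + 2 by ring]
  ring

lemma evenSum_add_two_eq_companionSum_add (n : ℕ) :
    evenSum x A B (n + 2) = companionSum x A B (n + 1) + B * x ^ n * mixedSum x A B n := by
  rw [companionSum, Nat.add_sub_cancel]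
  linear_combination evenSum_add_two_eq_shiftedOddSum x A B n + shiftedOddSum_eq x A B n -
    one_sub_pow_mul_evenSum_sub_oddSum x A B n

lemma evenSum_add_two (n : ℕ) : evenSum x A B (n + 2) = companionSum x A B (n + 1) +
    B * x ^ n * (companionSum x A B n + A * x ^ n * evenSum x A B n) := by
  rw [evenSum_add_two_eq_companionSum_add, mixedSum_eq]

end Sums

lemma qBinom_eq_gaussBinom {Q : MvPowerSeries (Fin 3) ℚ} (hQ : MvPowerSeries.constantCoeff Q = 0)
    (n k : ℕ) : qBinom Q n k = gaussBinom Q n k := by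
  rw [qBinom]
  split_ifs with h
  · have hunit : ∀ t ∈ range k, (1 - Q ^ (t + 1)) * (1 - Q ^ (t + 1))⁻¹ = 1 := fun t _ =>
      MvPowerSeries.mul_inv_cancel _ (by simp [hQ])
    rw [prod_mul_distrib, ← gaussBinom_mul_prod, mul_assoc, ← prod_mul_distrib, prod_eq_one hunit,
      mul_one]
  · exact (gaussBinom_eq_zero_of_lt Q (not_le.1 h)).symm

lemma qPoch_neg (c Q : MvPowerSeries (Fin 3) ℚ) (l : ℕ) : qPoch (-c) Q l = negQPoch c Q l := by
  simp only [qPoch, negQPoch, neg_mul, sub_neg_eq_add]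

def GapRel (x y : ℕ) : Prop := y + 2 ≤ x ∧ (y + 4 ≤ x ∨ (3 ∣ y ∧ x = y + 3) ∨ 6 ∣ (x + y))

/-- `l` lists the parts, in decreasing order, of a partition counted by `G₁ N`. -/
def Admissible (N : ℕ) (l : List ℕ) : Prop := (∀ x ∈ l, 2 ≤ x ∧ x ≤ N) ∧ l.IsChain GapRel

def tailsAfter (m : ℕ) : Set (List ℕ) := {t | Admissible m (m :: t)}

lemma lt_of_isChain_cons {m : ℕ} {t : List ℕ} (h : (m :: t).IsChain GapRel) : ∀ x ∈ t, x < m :=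
  fun _ hx => (h.imp (S := (· > ·)) fun _ _ hr => by unfold GapRel at hr; omega).rel_cons hx

lemma admissible_cons_iff {N y : ℕ} {s : List ℕ} :
    Admissible N (y :: s) ↔ y ≤ N ∧ s ∈ tailsAfter y := by
  refine ⟨fun h => ⟨(h.1 y List.mem_cons_self).2, fun x hx => ?_, h.2⟩,
    fun h => ⟨fun x hx => ?_, h.2.2⟩⟩
  · refine ⟨(h.1 x hx).1, ?_⟩
    rcases List.mem_cons.1 hx with rfl | hx
    · exact le_rfl
    · exact (lt_of_isChain_cons h.2 x hx).le
  · exact ⟨(h.2.1 x hx).1, (h.2.1 x hx).2.trans h.1⟩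

lemma cons_mem_tailsAfter_iff {m y : ℕ} {s : List ℕ} :
    y :: s ∈ tailsAfter m ↔ 2 ≤ m ∧ GapRel m y ∧ s ∈ tailsAfter y := by
  simp only [tailsAfter, Set.mem_ofPred_eq]
  constructor
  · intro h
    have hy := admissible_cons_iff.1 ⟨fun x hx => h.1 x (List.mem_cons_of_mem _ hx),
      (List.isChain_cons.1 h.2).2⟩
    exact ⟨(h.1 m List.mem_cons_self).1, (List.isChain_cons_cons.1 h.2).1, hy.2⟩
  · rintro ⟨hm, hrel, hs⟩
    refine ⟨fun x hx => ?_, List.isChain_cons_cons.2 ⟨hrel, hs.2⟩⟩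
    rcases List.mem_cons.1 hx with rfl | hx
    · exact ⟨hm, le_rfl⟩
    · exact (admissible_cons_iff.2 ⟨(by unfold GapRel at hrel; omega : y ≤ m), hs⟩).1 x hx

/-- The exponents of `a`, `b`, `q` in the monomial of a part `m`. -/
noncomputable def partWeight (m : ℕ) : Fin 3 →₀ ℕ :=
  Finsupp.single 0 (if m % 3 = 2 then 1 else 0) + Finsupp.single 1 (if m % 3 = 1 then 1 else 0) +
    Finsupp.single 2 m

noncomputable def listWeight (l : List ℕ) : Fin 3 →₀ ℕ := (l.map partWeight).sum

noncomputable def genFun (S : Set (List ℕ)) : MvPowerSeries (Fin 3) ℚ :=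
  fun d => ({l ∈ S | listWeight l = d}.ncard : ℚ)

lemma listWeight_cons (m : ℕ) (t : List ℕ) : listWeight (m :: t) = partWeight m + listWeight t := by
  simp [listWeight]

lemma listWeight_apply (l : List ℕ) :
    listWeight l 0 = (l.filter (fun x => x % 3 = 2)).length ∧
      listWeight l 1 = (l.filter (fun x => x % 3 = 1)).length ∧ listWeight l 2 = l.sum := by
  induction l with
  | nil => simp [listWeight]
  | cons m t ih =>
    simp only [listWeight_cons, Finsupp.add_apply, ih, List.filter_cons, List.sum_cons, partWeight]
    refine ⟨?_, ?_, ?_⟩ <;> split_ifs <;> simp_all <;> omega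

lemma coeff_genFun (S : Set (List ℕ)) (d : Fin 3 →₀ ℕ) :
    MvPowerSeries.coeff d (genFun S) = ({l ∈ S | listWeight l = d}.ncard : ℚ) := rfl

lemma listWeight_eq_iff {l : List ℕ} {d : Fin 3 →₀ ℕ} : listWeight l = d ↔
    (l.filter (fun x => x % 3 = 2)).length = d 0 ∧ (l.filter (fun x => x % 3 = 1)).length = d 1 ∧
      l.sum = d 2 := by
  obtain ⟨h0, h1, h2⟩ := listWeight_apply l
  rw [← h0, ← h1, ← h2]
  refine ⟨fun h => by simp [h], fun ⟨e0, e1, e2⟩ => Finsupp.ext fun i => ?_⟩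
  fin_cases i <;> assumption

lemma G₁_eq_genFun (N : ℕ) : G₁ N = genFun {l | Admissible N l} := by
  ext d
  rw [coeff_genFun, ← Nat.card_coe_set_eq]
  refine congrArg (fun n : ℕ => (n : ℚ)) (Nat.card_congr (Equiv.subtypeEquivRight fun l => ?_))
  rw [Set.mem_ofPred_eq, Set.mem_ofPred_eq, listWeight_eq_iff, Admissible, and_assoc]
  exact and_congr_left' (forall₂_congr fun x _ => by omega)

lemma finite_bounded_lists (s : ℕ) : {l : List ℕ | l.length ≤ s ∧ ∀ x ∈ l, x ≤ s}.Finite := by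
  refine ((List.finite_length_le (Fin (s + 1)) s).image (List.map Fin.val)).subset ?_
  rintro l ⟨hlen, hle⟩
  refine ⟨l.map (Fin.ofNat (s + 1)), by simpa using hlen, ?_⟩
  rw [List.map_map]
  conv_rhs => rw [← List.map_id l]
  exact List.map_congr_left fun x hx => by simp [Nat.mod_eq_of_lt (Nat.lt_succ_of_le (hle x hx))]

lemma finite_weight_fiber {S : Set (List ℕ)} (hS : ∀ l ∈ S, ∀ x ∈ l, 0 < x) (d : Fin 3 →₀ ℕ) :
    {l ∈ S | listWeight l = d}.Finite := by
  refine (finite_bounded_lists (d 2)).subset fun l ⟨hl, hd⟩ => ?_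
  rw [← (listWeight_eq_iff.1 hd).2.2]
  exact ⟨List.length_le_sum_of_one_le l (hS l hl), fun x hx => List.le_sum_of_mem hx⟩

lemma genFun_union {S T : Set (List ℕ)} (hST : Disjoint S T) (hS : ∀ l ∈ S, ∀ x ∈ l, 0 < x)
    (hT : ∀ l ∈ T, ∀ x ∈ l, 0 < x) : genFun (S ∪ T) = genFun S + genFun T := by
  ext d
  have : {l ∈ S ∪ T | listWeight l = d} =
      {l ∈ S | listWeight l = d} ∪ {l ∈ T | listWeight l = d} := by
    ext l
    simp [or_and_right]
  rw [map_add, coeff_genFun, coeff_genFun, coeff_genFun, this,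
    Set.ncard_union_eq (hST.mono (Set.sep_subset _ _) (Set.sep_subset _ _))
      (finite_weight_fiber hS d)
      (finite_weight_fiber hT d), Nat.cast_add]

lemma genFun_image_cons (m : ℕ) (S : Set (List ℕ)) :
    genFun (List.cons m '' S) = MvPowerSeries.monomial (partWeight m) 1 * genFun S := by
  ext d
  rw [MvPowerSeries.coeff_monomial_mul, coeff_genFun, coeff_genFun]
  split_ifs with h
  · have : {l ∈ List.cons m '' S | listWeight l = d} =
        List.cons m '' {t ∈ S | listWeight t = d - partWeight m} := by
      ext l
      simp only [Set.mem_ofPred_eq, Set.mem_image]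
      constructor
      · rintro ⟨⟨t, ht, rfl⟩, hd⟩
        exact ⟨t, ⟨ht, by rw [← hd, listWeight_cons, add_tsub_cancel_left]⟩, rfl⟩
      · rintro ⟨t, ⟨ht, hd⟩, rfl⟩
        exact ⟨⟨t, ht, rfl⟩, by rw [listWeight_cons, hd, add_tsub_cancel_of_le h]⟩
    rw [this, Set.ncard_image_of_injective _ List.cons_injective, one_mul]
  · have : {l ∈ List.cons m '' S | listWeight l = d} = ∅ := by
      refine Set.eq_empty_of_forall_notMem ?_
      rintro _ ⟨⟨t, _, rfl⟩, hd⟩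
      exact h (hd ▸ listWeight_cons m t ▸ le_self_add)
    rw [this, Set.ncard_empty, Nat.cast_zero]

lemma pos_of_admissible {N : ℕ} {l : List ℕ} (h : Admissible N l) : ∀ x ∈ l, 0 < x :=
  fun x hx => by have := (h.1 x hx).1; omega

lemma two_le_of_mem_tailsAfter {m : ℕ} {t : List ℕ} (h : t ∈ tailsAfter m) : 2 ≤ m :=
  (h.1 m List.mem_cons_self).1

lemma admissible_succ (m : ℕ) :
    {l | Admissible (m + 1) l} =
      {l | Admissible m l} ∪ List.cons (m + 1) '' tailsAfter (m + 1) := by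
  ext l
  cases l with
  | nil => simp [Admissible]
  | cons y s =>
    simp only [Set.mem_union, Set.mem_ofPred_eq, Set.mem_image, List.cons.injEq,
      admissible_cons_iff]
    constructor
    · rintro ⟨hy, hs⟩
      rcases Nat.lt_or_eq_of_le hy with hy | rfl
      · exact Or.inl ⟨Nat.le_of_lt_succ hy, hs⟩
      · exact Or.inr ⟨s, hs, rfl, rfl⟩
    · rintro (⟨hy, hs⟩ | ⟨t, ht, rfl, rfl⟩)
      · exact ⟨hy.trans (Nat.le_succ m), hs⟩
      · exact ⟨le_rfl, ht⟩

lemma G₁_succ (m : ℕ) : G₁ (m + 1) =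
    G₁ m + MvPowerSeries.monomial (partWeight (m + 1)) 1 * genFun (tailsAfter (m + 1)) := by
  have hdisj : Disjoint {l | Admissible m l} (List.cons (m + 1) '' tailsAfter (m + 1)) :=
    Set.disjoint_left.2 fun _ hl ⟨_, _, ht⟩ => by
      subst ht; exact absurd (admissible_cons_iff.1 hl).1 (by omega)
  rw [G₁_eq_genFun, G₁_eq_genFun, admissible_succ, genFun_union hdisj (fun _ => pos_of_admissible)
    (fun _ ⟨_, ht, hl⟩ => hl ▸ pos_of_admissible ht), genFun_image_cons]

lemma tailsAfter_eq_admissible {m k : ℕ} (hm : 2 ≤ m) (h : ∀ y, 2 ≤ y → (GapRel m y ↔ y ≤ k)) :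
    tailsAfter m = {t | Admissible k t} := by
  ext t
  cases t with
  | nil => simp [tailsAfter, Admissible, hm]
  | cons y s =>
    rw [cons_mem_tailsAfter_iff, Set.mem_ofPred_eq, admissible_cons_iff]
    constructor
    · rintro ⟨_, hrel, hs⟩
      exact ⟨(h y (two_le_of_mem_tailsAfter hs)).1 hrel, hs⟩
    · rintro ⟨hy, hs⟩
      exact ⟨hm, (h y (two_le_of_mem_tailsAfter hs)).2 hy, hs⟩

lemma tailsAfter_eq_union {m k m' : ℕ} (hm : 2 ≤ m)
    (h : ∀ y, 2 ≤ y → (GapRel m y ↔ y ≤ k ∨ y = m')) :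
    tailsAfter m = {t | Admissible k t} ∪ List.cons m' '' tailsAfter m' := by
  ext t
  cases t with
  | nil => simp [tailsAfter, Admissible, hm]
  | cons y s =>
    simp only [cons_mem_tailsAfter_iff, Set.mem_union, Set.mem_ofPred_eq, Set.mem_image,
      List.cons.injEq, admissible_cons_iff]
    constructor
    · rintro ⟨_, hrel, hs⟩
      rcases (h y (two_le_of_mem_tailsAfter hs)).1 hrel with hy | rfl
      · exact Or.inl ⟨hy, hs⟩
      · exact Or.inr ⟨s, hs, rfl, rfl⟩
    · rintro (⟨hy, hs⟩ | ⟨t, ht, rfl, rfl⟩)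
      · exact ⟨hm, (h y (two_le_of_mem_tailsAfter hs)).2 (Or.inl hy), hs⟩
      · exact ⟨hm, (h _ (two_le_of_mem_tailsAfter ht)).2 (Or.inr rfl), ht⟩

lemma genFun_tailsAfter_eq_G₁ {m k : ℕ} (hm : 2 ≤ m) (h : ∀ y, 2 ≤ y → (GapRel m y ↔ y ≤ k)) :
    genFun (tailsAfter m) = G₁ k := by
  rw [tailsAfter_eq_admissible hm h, G₁_eq_genFun]

lemma genFun_tailsAfter_eq_G₁_add {m k m' : ℕ} (hm : 2 ≤ m) (hk : k < m')
    (h : ∀ y, 2 ≤ y → (GapRel m y ↔ y ≤ k ∨ y = m')) :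
    genFun (tailsAfter m) =
      G₁ k + MvPowerSeries.monomial (partWeight m') 1 * genFun (tailsAfter m') := by
  have hdisj : Disjoint {l | Admissible k l} (List.cons m' '' tailsAfter m') :=
    Set.disjoint_left.2 fun _ hl ⟨_, _, ht⟩ => by
      subst ht; exact absurd (admissible_cons_iff.1 hl).1 (by omega)
  rw [tailsAfter_eq_union hm h, genFun_union hdisj (fun _ => pos_of_admissible)
    (fun _ ⟨_, ht, hl⟩ => hl ▸ pos_of_admissible (admissible_cons_iff.2 ⟨le_rfl, ht⟩)),
    genFun_image_cons, G₁_eq_genFun]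

lemma monomial_partWeight (m : ℕ) : MvPowerSeries.monomial (partWeight m) 1 =
    a ^ (if m % 3 = 2 then 1 else 0) * b ^ (if m % 3 = 1 then 1 else 0) * q ^ m := by
  rw [a, b, q, MvPowerSeries.X_pow_eq, MvPowerSeries.X_pow_eq, MvPowerSeries.X_pow_eq,
    MvPowerSeries.monomial_mul_monomial, MvPowerSeries.monomial_mul_monomial, one_mul, one_mul,
    partWeight]

lemma admissible_eq_singleton_nil {N : ℕ} (hN : N ≤ 1) : {l | Admissible N l} = {[]} := by
  ext l
  cases l with
  | nil => simp [Admissible]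
  | cons y s => simpa [Admissible] using fun h _ => by omega

lemma genFun_singleton_nil : genFun {[]} = 1 := by
  ext d
  rw [coeff_genFun, MvPowerSeries.coeff_one]
  by_cases hd : d = 0
  · have : {l ∈ ({[]} : Set (List ℕ)) | listWeight l = d} = {[]} := by
      ext l
      simp only [Set.mem_ofPred_eq, Set.mem_singleton_iff, and_iff_left_iff_imp]
      rintro rfl
      simp [listWeight, hd]
    rw [this, Set.ncard_singleton, if_pos hd, Nat.cast_one]
  · have : {l ∈ ({[]} : Set (List ℕ)) | listWeight l = d} = ∅ :=
      Set.eq_empty_of_forall_notMem fun l ⟨hl, hw⟩ => hd <| by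
        rw [← hw, Set.mem_singleton_iff.1 hl]; simp [listWeight]
    rw [this, Set.ncard_empty, if_neg hd, Nat.cast_zero]

lemma G₁_of_le_one {N : ℕ} (hN : N ≤ 1) : G₁ N = 1 := by
  rw [G₁_eq_genFun, admissible_eq_singleton_nil hN, genFun_singleton_nil]

lemma G₁_three_mul_add_three (n : ℕ) :
    G₁ (3 * n + 3) = G₁ (3 * n + 2) + (q ^ 3) ^ (n + 1) * G₁ (3 * n) := by
  rw [G₁_succ (3 * n + 2), genFun_tailsAfter_eq_G₁ (k := 3 * n) (by omega)
    (fun y _ => by unfold GapRel; omega), monomial_partWeight, if_neg (by omega), if_neg (by omega)]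
  ring

lemma G₁_three_mul_add_two (n : ℕ) :
    G₁ (3 * n + 2) = G₁ (3 * n + 1) + a * q ^ 2 * (q ^ 3) ^ n * G₁ (3 * n - 2) := by
  rw [G₁_succ (3 * n + 1), genFun_tailsAfter_eq_G₁ (k := 3 * n - 2) (by omega)
    (fun y _ => by unfold GapRel; omega), monomial_partWeight, if_pos (by omega), if_neg (by omega)]
  ring

lemma G₁_three_mul_add_four (n : ℕ) : G₁ (3 * n + 4) = G₁ (3 * n + 3) +
    b * q ^ 4 * (q ^ 3) ^ n * (G₁ (3 * n) + a * q ^ 2 * (q ^ 3) ^ n * G₁ (3 * n - 2)) := by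
  rw [G₁_succ (3 * n + 3), genFun_tailsAfter_eq_G₁_add (k := 3 * n) (m' := 3 * n + 2) (by omega)
    (by omega) (fun y _ => by unfold GapRel; omega), genFun_tailsAfter_eq_G₁ (k := 3 * n - 2)
    (by omega) (fun y _ => by unfold GapRel; omega), monomial_partWeight, monomial_partWeight,
    if_neg (by omega), if_pos (by omega), if_pos (by omega), if_neg (by omega)]
  ring

lemma G₁_eq_evenSum_and_companionSum (n : ℕ) :
    G₁ (3 * n - 2) = evenSum (q ^ 3) (a * q ^ 2) (b * q ^ 4) n ∧
      G₁ (3 * n) = companionSum (q ^ 3) (a * q ^ 2) (b * q ^ 4) n := by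
  induction n using Nat.twoStepInduction with
  | zero => simp [G₁_of_le_one]
  | one =>
    refine ⟨by simp [G₁_of_le_one], ?_⟩
    rw [companionSum_succ, G₁_three_mul_add_three 0, G₁_three_mul_add_two 0]
    norm_num [G₁_of_le_one]
  | more n ih₀ ih₁ =>
    obtain ⟨hα₀, hγ₀⟩ := ih₀
    obtain ⟨hα₁, hγ₁⟩ := ih₁
    have hα₂ : G₁ (3 * (n + 2) - 2) = evenSum (q ^ 3) (a * q ^ 2) (b * q ^ 4) (n + 2) := by
      rw [show 3 * (n + 2) - 2 = 3 * n + 4 by omega, G₁_three_mul_add_four,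
        show 3 * n + 3 = 3 * (n + 1) by ring, hγ₁, hγ₀, hα₀, evenSum_add_two]
    refine ⟨hα₂, ?_⟩
    rw [companionSum_succ _ _ _ (n + 1), show 3 * (n + 2) = 3 * (n + 1) + 3 by ring,
      G₁_three_mul_add_three, G₁_three_mul_add_two, show 3 * (n + 1) + 1 = 3 * (n + 2) - 2 by omega,
      hα₂, hα₁, hγ₁]

/-- Alladi–Andrews–Gordon polynomial representation (Berkovich–Uncu, eq. (polyAAG)):
`G_{1,3N-2}(a,b,q) = ∑_{l=0}^{⌊N/2⌋} (q³)^{binom(N-2l,2)} [N choose 2l]_{q³}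
 (-a q²; q⁶)_l (-b q⁴; q⁶)_l`. -/
theorem G1_polynomial_representation (N : ℕ) :
    G₁ (3 * N - 2) =
      ∑ l ∈ Finset.range (N / 2 + 1),
        (q ^ 3) ^ (Nat.choose (N - 2 * l) 2) * qBinom (q ^ 3) N (2 * l) *
          qPoch (-(a * q ^ 2)) (q ^ 6) l * qPoch (-(b * q ^ 4)) (q ^ 6) l := by
  have hq : MvPowerSeries.constantCoeff (q ^ 3) = 0 := by simp [q]
  rw [(G₁_eq_evenSum_and_companionSum N).1, evenSum,
    sum_range_eq_of_le (m := N / 2 + 1) (n := N + 1) (by omega) fun l hl => by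
      rw [gaussBinom_eq_zero_of_lt _ (by omega : N < 2 * l)]; ring]
  refine sum_congr rfl fun l _ => ?_
  rw [qBinom_eq_gaussBinom hq, qPoch_neg, qPoch_neg, show (q ^ 3) ^ 2 = q ^ 6 by ring]

end CapparelliAAG
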